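/- arXiv:1202.5023 — 2 statements merged into one kernel-verified Lean document; each statement's English description precedes it below -/
import Mathlib

section
/- Let F₁ be the cumulative distribution function of a real random variable X with finite first moment, and X' an independent copy of X. Then for every x ∈ ℝ, -∫_{-∞}^{∞} (F₁(y) - 1_{y ≥ x})² dy = (1/2)·E|X - X'| - E|X - x|. -/
/-!
Write `H a y = 1_{a ≤ y}`. Then `F₁ y - H x y = E[H X y - H x y]`, so its square is
`E[(H X y - H x y) (H X' y - H x y)]` for an independent copy `X'`, and by Fubini the CRPS is
`-E[∫ (H X - H x) (H X' - H x) dy]`. Since `∫ (H a - H b)² = |a - b|` (the integrand is the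
indicator of the interval between `a` and `b`), polarization gives
`∫ (H a - H x) (H b - H x) = (|a - x| + |b - x| - |a - b|) / 2`, which integrates to the claim.
-/

open MeasureTheory ProbabilityTheory Set

noncomputable def heaviside (a y : ℝ) : ℝ := if a ≤ y then 1 else 0

lemma Measurable.heaviside {α : Type*} [MeasurableSpace α] {f g : α → ℝ}
    (hf : Measurable f) (hg : Measurable g) : Measurable fun z => heaviside (f z) (g z) :=
  Measurable.ite (measurableSet_le hf hg) measurable_const measurable_const

lemma sq_heaviside_sub (a b y : ℝ) :
    (heaviside a y - heaviside b y) ^ 2 = (Ico (min a b) (max a b)).indicator 1 y := by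
  simp only [heaviside, indicator, mem_Ico, min_le_iff, lt_max_iff, Pi.one_apply]
  split_ifs <;> grind

lemma integrable_sq_heaviside_sub (a b : ℝ) :
    Integrable fun y => (heaviside a y - heaviside b y) ^ 2 := by
  simp_rw [sq_heaviside_sub]
  exact (integrable_indicator_iff measurableSet_Ico).2 (integrableOn_const measure_Ico_lt_top.ne)

lemma integral_sq_heaviside_sub (a b : ℝ) :
    ∫ y, (heaviside a y - heaviside b y) ^ 2 = |a - b| := by
  simp_rw [sq_heaviside_sub]
  rw [integral_indicator_one measurableSet_Ico, Real.volume_real_Ico_of_le min_le_max,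
    max_sub_min_eq_abs']

lemma heaviside_sub_mul_eq (a b x y : ℝ) :
    (heaviside a y - heaviside x y) * (heaviside b y - heaviside x y) =
      ((heaviside a y - heaviside x y) ^ 2 + (heaviside b y - heaviside x y) ^ 2
        - (heaviside a y - heaviside b y) ^ 2) / 2 := by
  ring

lemma integrable_heaviside_sub_mul (a b x : ℝ) :
    Integrable fun y => (heaviside a y - heaviside x y) * (heaviside b y - heaviside x y) := by
  simp_rw [heaviside_sub_mul_eq]
  exact (((integrable_sq_heaviside_sub a x).add (integrable_sq_heaviside_sub b x)).sub
    (integrable_sq_heaviside_sub a b)).div_const 2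

lemma integral_heaviside_sub_mul (a b x : ℝ) :
    ∫ y, (heaviside a y - heaviside x y) * (heaviside b y - heaviside x y) =
      (|a - x| + |b - x| - |a - b|) / 2 := by
  simp_rw [heaviside_sub_mul_eq]
  have h := integrable_sq_heaviside_sub
  rw [integral_div, integral_sub (by exact (h a x).add (h b x)) (h a b),
    integral_add (h a x) (h b x), integral_sq_heaviside_sub, integral_sq_heaviside_sub,
    integral_sq_heaviside_sub]

section

variable {ν : Measure ℝ} [IsProbabilityMeasure ν]

lemma integral_heaviside_eq_cdf (y : ℝ) :
    ∫ a, heaviside a y ∂ν = cdf ν y := by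
  have : (fun a => heaviside a y) = (Iic y).indicator 1 := by
    ext a; simp [heaviside, indicator]
  rw [this, integral_indicator_one measurableSet_Iic, cdf_eq_real]

lemma sq_cdf_sub_heaviside (x y : ℝ) :
    (cdf ν y - heaviside x y) ^ 2 = ∫ p, (heaviside p.1 y - heaviside x y) *
      (heaviside p.2 y - heaviside x y) ∂ν.prod ν := by
  have hH : Integrable (fun a => heaviside a y) ν :=
    (integrable_const (1 : ℝ)).mono (measurable_id.heaviside measurable_const).aestronglyMeasurable
      (.of_forall fun a => by simp only [heaviside]; split_ifs <;> simp)
  have : cdf ν y - heaviside x y = ∫ a, (heaviside a y - heaviside x y) ∂ν := by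
    rw [integral_sub hH (integrable_const _), integral_heaviside_eq_cdf, integral_const,
      probReal_univ, one_smul]
  rw [this, sq, ← integral_prod_mul]

lemma integrable_heaviside_sub_mul_prod (hint : Integrable (fun x : ℝ => x) ν) (x : ℝ) :
    Integrable (Function.uncurry fun (p : ℝ × ℝ) y =>
      (heaviside p.1 y - heaviside x y) * (heaviside p.2 y - heaviside x y))
      ((ν.prod ν).prod volume) := by
  have hmeas : Measurable (Function.uncurry fun (p : ℝ × ℝ) y =>
      (heaviside p.1 y - heaviside x y) * (heaviside p.2 y - heaviside x y)) :=
    ((measurable_fst.fst.heaviside measurable_snd).sub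
      (measurable_const.heaviside measurable_snd)).mul
      ((measurable_fst.snd.heaviside measurable_snd).sub
      (measurable_const.heaviside measurable_snd))
  have habs : Integrable (fun a => |a - x|) ν := (hint.sub (integrable_const x)).abs
  refine (integrable_prod_iff hmeas.aestronglyMeasurable).2
    ⟨.of_forall fun p => integrable_heaviside_sub_mul p.1 p.2 x, ?_⟩
  refine (((habs.comp_fst ν).add (habs.comp_snd ν)).div_const 2).mono'
    hmeas.aestronglyMeasurable.norm.integral_prod_right' (.of_forall fun p => ?_)
  -- `|u v| ≤ (u² + v²) / 2`, and the integrals of `u²`, `v²` are `|p.1 - x|`, `|p.2 - x|`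
  rw [Real.norm_of_nonneg (integral_nonneg fun _ => norm_nonneg _), Pi.add_apply,
    ← integral_sq_heaviside_sub, ← integral_sq_heaviside_sub,
    ← integral_add (integrable_sq_heaviside_sub _ _) (integrable_sq_heaviside_sub _ _),
    ← integral_div]
  refine integral_mono (integrable_heaviside_sub_mul p.1 p.2 x).norm
    (((integrable_sq_heaviside_sub _ _).add (integrable_sq_heaviside_sub _ _)).div_const 2)
    fun y => ?_
  simp only [Function.uncurry_apply_pair, Real.norm_eq_abs, abs_mul]
  linarith [two_mul_le_add_sq |heaviside p.1 y - heaviside x y| |heaviside p.2 y - heaviside x y|,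
    sq_abs (heaviside p.1 y - heaviside x y), sq_abs (heaviside p.2 y - heaviside x y)]

lemma integral_sq_cdf_sub_heaviside (hint : Integrable (fun x : ℝ => x) ν) (x : ℝ) :
    ∫ y, (cdf ν y - heaviside x y) ^ 2 =
      ∫ p, (|p.1 - x| + |p.2 - x| - |p.1 - p.2|) / 2 ∂ν.prod ν := by
  simp_rw [sq_cdf_sub_heaviside (ν := ν) x]
  rw [← integral_integral_swap (integrable_heaviside_sub_mul_prod hint x)]
  simp_rw [integral_heaviside_sub_mul]

end

/-- For `F₁` the cdf of a distribution `ν` on `ℝ` with finite first moment and `X, X' ~ ν`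
independent, `CRPS(F₁,x) = -∫ (F₁(y) - 1_{y ≥ x})² dy = (1/2)·E|X-X'| - E|X-x|`. -/
theorem stmt_8 (ν : Measure ℝ) [IsProbabilityMeasure ν]
    (hint : Integrable (fun x : ℝ => x) ν) :
    ∀ x : ℝ,
      -∫ y : ℝ, (cdf ν y - if x ≤ y then (1 : ℝ) else 0) ^ 2
        = (1 / 2) * (∫ a : ℝ, ∫ b : ℝ, |a - b| ∂ν ∂ν) - ∫ a : ℝ, |a - x| ∂ν := by
  intro x
  have habs : Integrable (fun a => |a - x|) ν := (hint.sub (integrable_const x)).abs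
  have hdiff : Integrable (fun p : ℝ × ℝ => |p.1 - p.2|) (ν.prod ν) :=
    ((hint.comp_fst ν).sub (hint.comp_snd ν)).abs
  change -∫ y, (cdf ν y - heaviside x y) ^ 2 = _
  rw [integral_sq_cdf_sub_heaviside hint x, integral_div,
    integral_sub (by exact (habs.comp_fst ν).add (habs.comp_snd ν)) hdiff,
    integral_add (habs.comp_fst ν) (habs.comp_snd ν), integral_fun_fst (fun a => |a - x|),
    integral_fun_snd (fun a => |a - x|), integral_prod _ hdiff]
  simp only [probReal_univ, one_smul]
  ring
end

section
/- For any cumulative distribution function F₁ of an integrable random variable, CRPS(F₁, F₁) := ∫ CRPS(F₁, x) dF₁(x) = -(1/2)·E|X - X'| ≤ 0, where X, X' are i.i.d. with distribution F₁. -/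
/-!
Both sides reduce, by Tonelli, to `∫ F(y) (1 - F(y)) dy`. For fixed `y`,
`E (F(y) - 1{X ≤ y})² = F(y) (1 - F(y))` handles the left side; the right side follows from
`∫ (1{a ≤ y} - 1{b ≤ y})² dy = |a - b|` and `E (1{X ≤ y} - 1{X' ≤ y})² = 2 F(y) (1 - F(y))`.
The computation is done with lower Lebesgue integrals; integrability of `X` makes the common
value finite, so it transfers to the Bochner integrals of the statement.
-/

open MeasureTheory ProbabilityTheory Set Function
open scoped ENNReal

@[fun_prop]
theorem Measurable.ite_le_one_zero {γ : Type*} [MeasurableSpace γ] {f g : γ → ℝ}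
    (hf : Measurable f) (hg : Measurable g) :
    Measurable fun x ↦ if f x ≤ g x then (1 : ℝ) else 0 :=
  Measurable.ite (measurableSet_le hf hg) measurable_const measurable_const

@[fun_prop]
theorem ProbabilityTheory.measurable_cdf (ν : Measure ℝ) : Measurable (cdf ν) :=
  (monotone_cdf ν).measurable

theorem integral_integral_eq_toReal_lintegral_lintegral {α β : Type*} [MeasurableSpace α]
    [MeasurableSpace β] {μ : Measure α} {ν : Measure β} [SFinite ν] {f : α → β → ℝ}
    (hf : Measurable (uncurry f)) (hf₀ : ∀ x y, 0 ≤ f x y)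
    (hfin : ∫⁻ x, ∫⁻ y, ENNReal.ofReal (f x y) ∂ν ∂μ ≠ ∞) :
    ∫ x, ∫ y, f x y ∂ν ∂μ = (∫⁻ x, ∫⁻ y, ENNReal.ofReal (f x y) ∂ν ∂μ).toReal := by
  have hg : Measurable fun x ↦ ∫⁻ y, ENNReal.ofReal (f x y) ∂ν :=
    hf.ennreal_ofReal.lintegral_prod_right'
  have hinner (x : α) : ∫ y, f x y ∂ν = (∫⁻ y, ENNReal.ofReal (f x y) ∂ν).toReal :=
    integral_eq_lintegral_of_nonneg_ae (ae_of_all _ (hf₀ x))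
      (hf.comp measurable_prodMk_left).aestronglyMeasurable
  simp_rw [hinner]
  exact integral_toReal hg.aemeasurable (ae_lt_top hg hfin)

theorem lintegral_sq_ite_le_sub_ite_le (a b : ℝ) :
    ∫⁻ y, ENNReal.ofReal (((if a ≤ y then 1 else 0) - if b ≤ y then 1 else 0) ^ 2)
      = ENNReal.ofReal |a - b| := by
  wlog hab : a ≤ b generalizing a b
  · rw [abs_sub_comm, ← this b a (le_of_not_ge hab)]
    congr! 3
    ring
  have hind (y : ℝ) : ENNReal.ofReal (((if a ≤ y then 1 else 0) - if b ≤ y then 1 else 0) ^ 2)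
      = (Ico a b).indicator 1 y := by
    by_cases hay : a ≤ y <;> by_cases hby : b ≤ y <;> simp [hay, hby, indicator]
    exact hay (hab.trans hby)
  rw [lintegral_congr hind, lintegral_indicator_one measurableSet_Ico, Real.volume_Ico,
    abs_of_nonpos (sub_nonpos.2 hab), neg_sub]

theorem lintegral_lintegral_ofReal_abs_sub_ne_top {μ ν : Measure ℝ} [IsFiniteMeasure μ]
    [IsFiniteMeasure ν] (hμ : Integrable (fun x : ℝ ↦ x) μ) (hν : Integrable (fun x : ℝ ↦ x) ν) :
    ∫⁻ a, ∫⁻ b, ENNReal.ofReal |a - b| ∂ν ∂μ ≠ ∞ := by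
  rw [← lintegral_prod (fun p : ℝ × ℝ ↦ ENNReal.ofReal |p.1 - p.2|) (by fun_prop)]
  exact ((hμ.comp_fst ν).sub (hν.comp_snd μ)).abs.lintegral_lt_top.ne

section

variable (ν : Measure ℝ) [IsProbabilityMeasure ν]

theorem lintegral_ite_le_eq_cdf (y : ℝ) (c d : ℝ≥0∞) :
    ∫⁻ x, (if x ≤ y then c else d) ∂ν
      = c * ENNReal.ofReal (cdf ν y) + d * ENNReal.ofReal (1 - cdf ν y) := by
  have hIic : ν (Iic y) = ENNReal.ofReal (cdf ν y) := (ofReal_cdf ν y).symm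
  have hIoi : ν (Iic y)ᶜ = ENNReal.ofReal (1 - cdf ν y) := by
    rw [prob_compl_eq_one_sub measurableSet_Iic, hIic, ENNReal.ofReal_sub _ (cdf_nonneg ν y),
      ENNReal.ofReal_one]
  have h := lintegral_piecewise (μ := ν) (measurableSet_Iic (a := y)) (fun _ ↦ c) (fun _ ↦ d)
  rwa [setLIntegral_const, setLIntegral_const, hIic, hIoi] at h

theorem lintegral_sq_sub_ite_le (t y : ℝ) :
    ∫⁻ x, ENNReal.ofReal ((t - if x ≤ y then 1 else 0) ^ 2) ∂ν
      = ENNReal.ofReal ((t - 1) ^ 2 * cdf ν y + t ^ 2 * (1 - cdf ν y)) := by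
  have hite (x : ℝ) : ENNReal.ofReal ((t - if x ≤ y then 1 else 0) ^ 2)
      = if x ≤ y then ENNReal.ofReal ((t - 1) ^ 2) else ENNReal.ofReal (t ^ 2) := by
    split_ifs <;> simp
  rw [lintegral_congr hite, lintegral_ite_le_eq_cdf, ← ENNReal.ofReal_mul (sq_nonneg _),
    ← ENNReal.ofReal_mul (sq_nonneg _), ← ENNReal.ofReal_add]
  · exact mul_nonneg (sq_nonneg _) (cdf_nonneg ν y)
  · exact mul_nonneg (sq_nonneg _) (sub_nonneg.2 (cdf_le_one ν y))

theorem lintegral_sq_cdf_sub_ite_le (y : ℝ) :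
    ∫⁻ x, ENNReal.ofReal ((cdf ν y - if x ≤ y then 1 else 0) ^ 2) ∂ν
      = ENNReal.ofReal (cdf ν y * (1 - cdf ν y)) := by
  rw [lintegral_sq_sub_ite_le]
  congr 1
  ring

theorem lintegral_prod_sq_ite_le_sub_ite_le (y : ℝ) :
    ∫⁻ p, ENNReal.ofReal (((if p.1 ≤ y then 1 else 0) - if p.2 ≤ y then 1 else 0) ^ 2) ∂(ν.prod ν)
      = 2 * ENNReal.ofReal (cdf ν y * (1 - cdf ν y)) := by
  have hinner (a : ℝ) :
      ∫⁻ b, ENNReal.ofReal (((if a ≤ y then 1 else 0) - if b ≤ y then 1 else 0) ^ 2) ∂ν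
        = if a ≤ y then ENNReal.ofReal (1 - cdf ν y) else ENNReal.ofReal (cdf ν y) := by
    rw [lintegral_sq_sub_ite_le]
    split_ifs <;> simp
  rw [lintegral_prod _ (Measurable.aemeasurable (by fun_prop)), lintegral_congr hinner,
    lintegral_ite_le_eq_cdf, ← ENNReal.ofReal_mul (sub_nonneg.2 (cdf_le_one ν y)),
    ← ENNReal.ofReal_mul (cdf_nonneg ν y), mul_comm (1 - cdf ν y), two_mul]

theorem lintegral_lintegral_ofReal_abs_sub :
    ∫⁻ a, ∫⁻ b, ENNReal.ofReal |a - b| ∂ν ∂ν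
      = 2 * ∫⁻ y, ENNReal.ofReal (cdf ν y * (1 - cdf ν y)) := by
  rw [← lintegral_prod (fun p : ℝ × ℝ ↦ ENNReal.ofReal |p.1 - p.2|) (by fun_prop)]
  simp_rw [← lintegral_sq_ite_le_sub_ite_le]
  rw [lintegral_lintegral_swap (Measurable.aemeasurable ?_)]
  · simp_rw [lintegral_prod_sq_ite_le_sub_ite_le]
    exact lintegral_const_mul _ (by fun_prop)
  · fun_prop

end

/-- For `F₁` the cdf of a distribution `ν` on `ℝ` with finite first moment and `X, X' ~ ν`
independent, `CRPS(F₁,F₁) = ∫ CRPS(F₁,x) dF₁(x) = -(1/2)·E|X-X'| ≤ 0`. -/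
theorem stmt_9 (ν : Measure ℝ) [IsProbabilityMeasure ν]
    (hint : Integrable (fun x : ℝ => x) ν) :
    (∫ x : ℝ, (-∫ y : ℝ, (cdf ν y - if x ≤ y then (1 : ℝ) else 0) ^ 2) ∂ν
        = -(1 / 2) * (∫ a : ℝ, ∫ b : ℝ, |a - b| ∂ν ∂ν)) ∧
      (∫ x : ℝ, (-∫ y : ℝ, (cdf ν y - if x ≤ y then (1 : ℝ) else 0) ^ 2) ∂ν ≤ 0) := by
  set K := ∫⁻ y, ENNReal.ofReal (cdf ν y * (1 - cdf ν y))
  have hcrps : ∫⁻ x, (∫⁻ y, ENNReal.ofReal ((cdf ν y - if x ≤ y then 1 else 0) ^ 2)) ∂ν = K := by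
    rw [lintegral_lintegral_swap (by fun_prop)]
    simp_rw [lintegral_sq_cdf_sub_ite_le, K]
  have hmd : ∫⁻ a, ∫⁻ b, ENNReal.ofReal |a - b| ∂ν ∂ν = 2 * K :=
    lintegral_lintegral_ofReal_abs_sub ν
  have hmd_ne_top := lintegral_lintegral_ofReal_abs_sub_ne_top hint hint
  have hK : K ≠ ∞ := by
    simpa [hmd, ENNReal.mul_eq_top] using hmd_ne_top
  have hlhs : ∫ x, (-∫ y, (cdf ν y - if x ≤ y then (1 : ℝ) else 0) ^ 2) ∂ν = -K.toReal := by
    rw [integral_neg, integral_integral_eq_toReal_lintegral_lintegral (by fun_prop)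
      (fun _ _ ↦ sq_nonneg _) (hcrps ▸ hK), hcrps]
  have hrhs : ∫ a, ∫ b, |a - b| ∂ν ∂ν = 2 * K.toReal := by
    rw [integral_integral_eq_toReal_lintegral_lintegral (by fun_prop) (fun _ _ ↦ abs_nonneg _)
      hmd_ne_top, hmd, ENNReal.toReal_mul]
    norm_num
  exact ⟨by rw [hlhs, hrhs]; ring, by rw [hlhs]; exact neg_nonpos.2 ENNReal.toReal_nonneg⟩
end
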